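/- Let (g,·) be a pre-Lie algebra over a field K of characteristic 0 with a representation (V;ρ,μ), and let T₁, T₂: V → g be O-operators such that T₂ is bijective and T₁, T₂ are compatible, i.e. for all k₁,k₂ ∈ K the map k₁T₁ + k₂T₂ is again an O-operator. Then N = T₁∘T₂⁻¹ is a Nijenhuis operator on (g,·), i.e. N(x)·N(y) = N(N(x)·y + x·N(y) − N(x·y)) for all x,y ∈ g. -/
import Mathlib


/-- The product `u ·^T v := ρ(T u) v + μ(T v) u` on `V` associated to a linear map
`T : V → g` and a pair of linear maps `ρ, μ : g → End(V)`. -/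
def oProd {K g V : Type*} [Field K] [AddCommGroup g] [Module K g]
    [AddCommGroup V] [Module K V]
    (ρ μ : g →ₗ[K] Module.End K V) (T : V →ₗ[K] g) (u v : V) : V :=
  ρ (T u) v + μ (T v) u

/-- If `T₁, T₂` are compatible O-operators on a pre-Lie algebra `(g,·)`
associated to a representation `(V; ρ, μ)` and `T₂` is bijective, then
`N = T₁ ∘ T₂⁻¹` (characterized by `N ∘ T₂ = T₁`) is a Nijenhuis operator on `(g,·)`. -/
theorem compatible_oOperators_give_nijenhuis {K : Type*} [Field K] [CharZero K]
    {g V : Type*} [AddCommGroup g] [Module K g] [AddCommGroup V] [Module K V]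
    (mul : g →ₗ[K] g →ₗ[K] g)
    (hpre : ∀ x y z : g,
      mul (mul x y) z - mul x (mul y z) = mul (mul y x) z - mul y (mul x z))
    (ρ μ : g →ₗ[K] Module.End K V)
    (hrep₁ : ∀ x y : g, ρ (mul x y - mul y x) = ρ x * ρ y - ρ y * ρ x)
    (hrep₂ : ∀ x y : g, ρ x * μ y - μ y * ρ x = μ (mul x y) - μ y * μ x)
    (T₁ T₂ : V →ₗ[K] g)
    (hT₁ : ∀ u v : V, mul (T₁ u) (T₁ v) = T₁ (oProd ρ μ T₁ u v))
    (hT₂ : ∀ u v : V, mul (T₂ u) (T₂ v) = T₂ (oProd ρ μ T₂ u v))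
    (hcompat : ∀ k₁ k₂ : K, ∀ u v : V,
      mul ((k₁ • T₁ + k₂ • T₂) u) ((k₁ • T₁ + k₂ • T₂) v)
        = (k₁ • T₁ + k₂ • T₂) (oProd ρ μ (k₁ • T₁ + k₂ • T₂) u v))
    (hbij : Function.Bijective T₂)
    (N : g →ₗ[K] g) (hN : ∀ u : V, N (T₂ u) = T₁ u) :
    ∀ x y : g, mul (N x) (N y) = N (mul (N x) y + mul x (N y) - N (mul x y)) := by
  intro x y
  obtain ⟨u, rfl⟩ := hbij.2 x
  obtain ⟨v, rfl⟩ := hbij.2 y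
  have hmix : mul (T₁ u) (T₂ v) + mul (T₂ u) (T₁ v)
      = T₁ (oProd ρ μ T₂ u v) + T₂ (oProd ρ μ T₁ u v) := by
    have h := hcompat 1 1 u v
    simp only [one_smul, LinearMap.add_apply, map_add, LinearMap.map_add₂] at h
    have h1 := hT₁ u v
    have h2 := hT₂ u v
    have hsplit : oProd ρ μ (T₁ + T₂) u v = oProd ρ μ T₁ u v + oProd ρ μ T₂ u v := by
      simp only [oProd, LinearMap.add_apply, map_add]
      abel
    rw [hsplit] at h
    simp only [map_add] at h
    rw [h1, h2] at h
    abel_nf at h ⊢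
    linear_combination (norm := abel_nf) h
  rw [hN u, hN v, hT₂ u v, hN, hT₁ u v]
  have : mul (T₁ u) (T₂ v) + mul (T₂ u) (T₁ v) - T₁ (oProd ρ μ T₂ u v)
      = T₂ (oProd ρ μ T₁ u v) := by
    rw [hmix]; abel
  rw [this, hN]
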